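/- arXiv:math/0112133 — 3 statements merged into one kernel-verified Lean document; each statement's English description precedes it below -/
import Mathlib

section
/- For any partition ρ and positive integer n, the n-core of ρ is well-defined: any two maximal sequences of legal n-rim hook removals from ρ terminate at the same partition. -/
open YoungDiagram

namespace QCGrass

/-- The rectangular Young diagram with `m` rows of length `M`. -/
def rect (m M : ℕ) : YoungDiagram :=
  ⟨Finset.range m ×ˢ Finset.range M, by
    intro a b hba ha
    simp only [Finset.coe_product, Set.mem_prod, Finset.mem_coe, Finset.mem_range] at *
    exact ⟨lt_of_le_of_lt hba.1 ha.1, lt_of_le_of_lt hba.2 ha.2⟩⟩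

/-- The cells of the skew shape `nu / lam`. -/
def skewCells (lam nu : YoungDiagram) : Finset (ℕ × ℕ) := nu.cells \ lam.cells

/-- `T` is a Littlewood–Richardson skew tableau of shape `nu / lam` and content `mu`:
entries (valued in `{1, 2, …}`, with `0` meaning "no entry") are supported exactly on the
skew shape `nu / lam`, weakly increase along rows, strictly increase down columns, the number
of entries equal to `r + 1` is the `r`-th row length of `mu`, and the reverse reading word
(rows read right to left, top to bottom) is a lattice word. -/
def IsLRTableau (lam mu nu : YoungDiagram) (T : ℕ × ℕ → ℕ) : Prop :=
  lam ≤ nu ∧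
  (∀ p : ℕ × ℕ, 1 ≤ T p ↔ p ∈ skewCells lam nu) ∧
  (∀ i j j' : ℕ, j ≤ j' → (i, j) ∈ skewCells lam nu → (i, j') ∈ skewCells lam nu →
      T (i, j) ≤ T (i, j')) ∧
  (∀ i i' j : ℕ, i < i' → (i, j) ∈ skewCells lam nu → (i', j) ∈ skewCells lam nu →
      T (i, j) < T (i', j)) ∧
  (∀ r : ℕ, ((skewCells lam nu).filter (fun p => T p = r + 1)).card = mu.rowLen r) ∧
  (∀ i j r : ℕ,
      ((skewCells lam nu).filter
        (fun p => T p = r + 2 ∧ (p.1 < i ∨ (p.1 = i ∧ j ≤ p.2)))).card ≤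
      ((skewCells lam nu).filter
        (fun p => T p = r + 1 ∧ (p.1 < i ∨ (p.1 = i ∧ j ≤ p.2)))).card)

/-- The Littlewood–Richardson coefficient `c^nu_{lam, mu}`, defined as the number of
Littlewood–Richardson skew tableaux of shape `nu / lam` and content `mu`. -/
noncomputable def lrCoeff (lam mu nu : YoungDiagram) : ℕ :=
  Nat.card {T : ℕ × ℕ → ℕ // IsLRTableau lam mu nu T}

/-- The set of boxes (in `0`-indexed matrix coordinates) of `mu` rotated 180 degrees and
placed in the lower-right corner of the `l × k` rectangle. -/
def rotSet (l k : ℕ) (mu : YoungDiagram) : Set (ℕ × ℕ) :=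
  {p | p.1 < l ∧ p.2 < k ∧ k - mu.rowLen (l - 1 - p.1) ≤ p.2}

/-- Two boxes are adjacent when they share an edge. -/
def Adjacent (p q : ℕ × ℕ) : Prop :=
  (p.1 = q.1 ∧ (p.2 = q.2 + 1 ∨ q.2 = p.2 + 1)) ∨
  (p.2 = q.2 ∧ (p.1 = q.1 + 1 ∨ q.1 = p.1 + 1))

/-- `mu` is obtained from `lam` by removing a legal `n`-rim hook: `mu ⊆ lam` (so the removal
leaves a Young diagram), the removed set has `n` boxes, is edge-connected, and contains
no `2 × 2` square. -/
def IsRimHookRemoval (n : ℕ) (lam mu : YoungDiagram) : Prop :=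
  mu ≤ lam ∧ (skewCells mu lam).card = n ∧
  (∀ p ∈ skewCells mu lam, ∀ q ∈ skewCells mu lam,
    Relation.ReflTransGen
      (fun a b => a ∈ skewCells mu lam ∧ b ∈ skewCells mu lam ∧ Adjacent a b) p q) ∧
  ¬ ∃ i j : ℕ, (i, j) ∈ skewCells mu lam ∧ (i + 1, j) ∈ skewCells mu lam ∧
      (i, j + 1) ∈ skewCells mu lam ∧ (i + 1, j + 1) ∈ skewCells mu lam

/-- One legal `n`-rim hook removal step. -/
def RimStep (n : ℕ) (lam mu : YoungDiagram) : Prop := IsRimHookRemoval n lam mu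

/-- A diagram is an `n`-core when no legal `n`-rim hook can be removed from it. -/
def IsCore (n : ℕ) (t : YoungDiagram) : Prop := ¬ ∃ s, RimStep n t s

/-- `ReachesIn n m a b` : `b` is obtained from `a` by `m` successive legal `n`-rim hook
removals. -/
def ReachesIn (n : ℕ) : ℕ → YoungDiagram → YoungDiagram → Prop
  | 0 => fun a b => a = b
  | m + 1 => fun a b => ∃ c, RimStep n a c ∧ ReachesIn n m c b

/-- The width (number of occupied columns) of the strip removed in passing
from `lam` to `mu`. -/
def hookWidth (lam mu : YoungDiagram) : ℕ := ((skewCells mu lam).image Prod.snd).card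

/-- The height (number of occupied rows) of the strip removed in passing
from `lam` to `mu`. -/
def hookHeight (lam mu : YoungDiagram) : ℕ := ((skewCells mu lam).image Prod.fst).card

/-- `ReachesInSign n k m s a b` : `b` is obtained from `a` by `m` successive legal `n`-rim
hook removals, and `s = ∏ (-1)^(k - width(R_i))` over the removed hooks `R_i`. -/
def ReachesInSign (n k : ℕ) : ℕ → ℤ → YoungDiagram → YoungDiagram → Prop
  | 0 => fun s a b => a = b ∧ s = 1
  | m + 1 => fun s a b => ∃ c s', RimStep n a c ∧ ReachesInSign n k m s' c b ∧
      s = (-1) ^ (k - hookWidth a c) * s'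

/-- `diagLen lam` is the number of diagonal boxes of `lam`, i.e. the side length of the
largest square contained in `lam`. -/
def diagLen (lam : YoungDiagram) : ℕ := (lam.cells.filter fun p => p.1 = p.2).card

/-- A `d × d` square of boxes fits inside `lam ∩ rotate(mu)` within the `l × k` rectangle. -/
def SquareFits (l k : ℕ) (lam mu : YoungDiagram) (d : ℕ) : Prop :=
  ∃ i j : ℕ, ∀ i' j' : ℕ, i ≤ i' → i' < i + d → j ≤ j' → j' < j + d →
    (i', j') ∈ lam.cells ∧ (i', j') ∈ rotSet l k mu

/-- The triple product `σ_lam · σ_mu · σ_nu` is nonzero in `H^*(Gr(l, l+k))`: some `rho ⊆ l × k`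
has `c^rho_{lam,mu} ≠ 0` and `rho` is disjoint from `rotate(nu)`. -/
def TripleNonzero (l k : ℕ) (lam mu nu : YoungDiagram) : Prop :=
  ∃ rho, rho ≤ rect l k ∧ lrCoeff lam mu rho ≠ 0 ∧
    ∀ i, i < l → rho.rowLen i + nu.rowLen (l - 1 - i) ≤ k


/-!
Encode a diagram `λ` by its beta-numbers `β k = λ_k - k`, the bead positions of an abacus.
Removing an `n`-rim hook occupying rows `i, …, j` shifts `β (i+1), …, β j` up one place and puts
`β i - n` in place `j`; on bead sets it moves one bead from `b` to the empty position `b - n`, and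
conversely every such bead move comes from a rim-hook removal. Two different bead moves commute,
so the removal relation is strongly confluent, and by the Church–Rosser property two irreducible
diagrams (`n`-cores) reachable from `ρ` coincide.
-/

open Relation Filter

lemma antitone_add_of_strictAnti {g : ℕ → ℤ} (hg : StrictAnti g) :
    Antitone fun k => g k + k :=
  antitone_nat_of_succ_le fun k => by have := hg (lt_add_one k); push_cast; omega

lemma le_sub_of_strictAnti {g : ℕ → ℤ} (hg : StrictAnti g) (k : ℕ) : g k ≤ g 0 - k := by
  have := antitone_add_of_strictAnti hg (Nat.zero_le k)
  simp only [Nat.cast_zero, add_zero] at this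
  omega

lemma insert_diff_singleton_comm {α : Type*} {s : Set α} {a b a' b' : α} (ha' : a' ≠ b)
    (hb' : b' ≠ a) :
    insert b' (insert a' (s \ {a}) \ {b}) = insert a' (insert b' (s \ {b}) \ {a}) := by
  ext x
  simp only [Set.mem_insert_iff, Set.mem_sdiff, Set.mem_singleton_iff]
  grind

structure IsBeadShift (f g : ℕ → ℤ) (i j : ℕ) : Prop where
  le : i ≤ j
  eq_of_lt : ∀ k < i, g k = f k
  eq_succ : ∀ k, i ≤ k → k < j → g k = f (k + 1)
  lt_last : g j < f j
  eq_of_gt : ∀ k, j < k → g k = f k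

namespace IsBeadShift

variable {f g : ℕ → ℤ} {i j : ℕ}

lemma range_eq (h : IsBeadShift f g i j) (hf : f.Injective) :
    Set.range g = insert (g j) (Set.range f \ {f i}) := by
  ext x
  simp only [Set.mem_insert_iff, Set.mem_sdiff, Set.mem_range, Set.mem_singleton_iff]
  constructor
  · rintro ⟨k, rfl⟩
    rcases lt_trichotomy k j with hkj | rfl | hjk
    · refine Or.inr ?_
      rcases lt_or_ge k i with hki | hik
      · exact ⟨⟨k, (h.eq_of_lt k hki).symm⟩, by rw [h.eq_of_lt k hki]; exact hf.ne (by omega)⟩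
      · exact ⟨⟨k + 1, (h.eq_succ k hik hkj).symm⟩,
          by rw [h.eq_succ k hik hkj]; exact hf.ne (by omega)⟩
    · exact Or.inl rfl
    · exact Or.inr ⟨⟨k, (h.eq_of_gt k hjk).symm⟩,
        by rw [h.eq_of_gt k hjk]; exact hf.ne (by have := h.le; omega)⟩
  · rintro (rfl | ⟨⟨m, rfl⟩, hm⟩)
    · exact ⟨j, rfl⟩
    · have hmi : m ≠ i := fun hmi => hm (congrArg f hmi)
      rcases lt_or_ge m i with hlt | hle
      · exact ⟨m, h.eq_of_lt m hlt⟩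
      rcases le_or_gt m j with hmj | hmj
      · refine ⟨m - 1, ?_⟩
        rw [h.eq_succ (m - 1) (by omega) (by omega), Nat.sub_add_cancel (by omega)]
      · exact ⟨m, h.eq_of_gt m hmj⟩

lemma notMem_range (h : IsBeadShift f g i j) (hf : StrictAnti f) (hg : StrictAnti g) :
    g j ∉ Set.range f := by
  have hlow : f (j + 1) < g j := h.eq_of_gt (j + 1) (lt_add_one j) ▸ hg (lt_add_one j)
  rintro ⟨m, hm⟩
  rcases le_or_gt m j with hmj | hmj
  · have := hf.antitone hmj; have := h.lt_last; omega
  · have := hf.antitone (show j + 1 ≤ m by omega); omega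

lemma sum_sub (h : IsBeadShift f g i j) : ∑ k ∈ Finset.Icc i j, (f k - g k) = f i - g j := by
  have hmid : ∑ k ∈ Finset.Ico i j, (f k - g k) = -∑ k ∈ Finset.Ico i j, (f (k + 1) - f k) := by
    rw [← Finset.sum_neg_distrib]
    refine Finset.sum_congr rfl fun k hk => ?_
    rw [Finset.mem_Ico] at hk
    rw [h.eq_succ k hk.1 hk.2]
    ring
  rw [← Finset.Ico_add_one_right_eq_Icc, Finset.sum_Ico_succ_top (by have := h.le; omega),
    hmid, Finset.sum_Ico_sub f h.le]
  ring

lemma apply_le (h : IsBeadShift f g i j) (hf : StrictAnti f) (k : ℕ) : g k ≤ f k := by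
  rcases lt_or_ge k i with hki | hik
  · exact (h.eq_of_lt k hki).le
  rcases lt_trichotomy k j with hkj | rfl | hjk
  · rw [h.eq_succ k hik hkj]; exact (hf (lt_add_one k)).le
  · exact h.lt_last.le
  · exact (h.eq_of_gt k hjk).le

end IsBeadShift

lemma exists_isBeadShift {f : ℕ → ℤ} (hf : StrictAnti f) {i : ℕ} {y : ℤ} (hy : y < f i)
    (hyf : y ∉ Set.range f) :
    ∃ j g, IsBeadShift f g i j ∧ StrictAnti g ∧ g j = y := by
  have hex : ∃ k, f k < y := ⟨(f 0 - y + 1).toNat, by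
    have := le_sub_of_strictAnti hf (f 0 - y + 1).toNat; omega⟩
  set m := Nat.find hex
  have hm : f m < y := Nat.find_spec hex
  have him : i < m := by
    by_contra! hmi; have := hf.antitone hmi; omega
  set j := m - 1
  have hjm : j + 1 = m := by omega
  have hyj : y < f j := lt_of_le_of_ne (not_lt.1 (Nat.find_min hex (by omega)))
    fun hj => hyf ⟨j, hj.symm⟩
  rw [← hjm] at hm
  refine ⟨j, fun k => if k < i then f k else if k < j then f (k + 1) else if k = j then y else f k,
    ⟨by omega, fun k hk => if_pos hk, fun k hik hkj => by simp [hkj, hik.not_gt],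
      by simp [hyj, show ¬ j < i by omega], fun k hk => by simp [hk.ne', show ¬ k < i by omega,
        show ¬ k < j by omega]⟩, ?_, by simp [show ¬ j < i by omega]⟩
  refine strictAnti_nat_of_succ_lt fun k => ?_
  have h1 := hf (lt_add_one k)
  have h2 := hf (lt_add_one (k + 1))
  split_ifs <;> grind

def beta (t : YoungDiagram) (k : ℕ) : ℤ := t.rowLen k - k

def beads (t : YoungDiagram) : Set ℤ := Set.range (beta t)

lemma beta_strictAnti (t : YoungDiagram) : StrictAnti (beta t) :=
  strictAnti_nat_of_succ_lt fun k => by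
    have := t.rowLen_anti k (k + 1) k.le_succ
    simp only [beta]; push_cast; omega

lemma beta_eq_beta_iff {mu lam : YoungDiagram} {k : ℕ} :
    beta mu k = beta lam k ↔ mu.rowLen k = lam.rowLen k := by
  simp only [beta]; omega

lemma beta_eq_beta_succ_iff {mu lam : YoungDiagram} {k : ℕ} :
    beta mu k = beta lam (k + 1) ↔ mu.rowLen k + 1 = lam.rowLen (k + 1) := by
  simp only [beta]; push_cast; omega

lemma beta_lt_beta_iff {mu lam : YoungDiagram} {k : ℕ} :
    beta mu k < beta lam k ↔ mu.rowLen k < lam.rowLen k := by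
  simp only [beta]; omega

lemma eq_of_rowLen_eq {mu lam : YoungDiagram} (h : mu.rowLen = lam.rowLen) : mu = lam := by
  ext ⟨a, b⟩
  simp only [YoungDiagram.mem_cells, YoungDiagram.mem_iff_lt_rowLen, h]

lemma le_iff_rowLen_le {mu lam : YoungDiagram} : mu ≤ lam ↔ ∀ k, mu.rowLen k ≤ lam.rowLen k := by
  simp only [← YoungDiagram.cells_subset_iff, Finset.subset_iff, Prod.forall,
    YoungDiagram.mem_cells, YoungDiagram.mem_iff_lt_rowLen]
  exact ⟨fun h k => le_of_forall_lt (h k), fun h k c hc => hc.trans_le (h k)⟩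

lemma eq_of_beads_eq {mu lam : YoungDiagram} (h : beads mu = beads lam) : mu = lam :=
  eq_of_rowLen_eq <| funext fun k => beta_eq_beta_iff.1 <| congrFun
    (((beta_strictAnti mu).dual_right.range_inj (beta_strictAnti lam).dual_right).1 h) k

lemma exists_rowLen_eq (lam : YoungDiagram) {r : ℕ → ℕ} (hr : Antitone r)
    (hle : ∀ k, r k ≤ lam.rowLen k) : ∃ mu : YoungDiagram, mu.rowLen = r := by
  let mu : YoungDiagram := ⟨lam.cells.filter fun p => p.2 < r p.1, fun p q hqp hp => by
    simp only [Finset.coe_filter, Set.mem_ofPred_eq, YoungDiagram.mem_cells] at hp ⊢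
    exact ⟨lam.up_left_mem hqp.1 hqp.2 hp.1, hqp.2.trans_lt (hp.2.trans_le (hr hqp.1))⟩⟩
  refine ⟨mu, funext fun k => eq_of_forall_lt_iff fun c => ?_⟩
  change c < mu.rowLen k ↔ c < r k
  rw [← YoungDiagram.mem_iff_lt_rowLen, ← YoungDiagram.mem_cells]
  simp only [mu, Finset.mem_filter, YoungDiagram.mem_cells, YoungDiagram.mem_iff_lt_rowLen]
  exact ⟨And.right, fun hc => ⟨hc.trans_le (hle k), hc⟩⟩

lemma exists_beta_eq {lam : YoungDiagram} {g : ℕ → ℤ} (hg : StrictAnti g)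
    (hle : ∀ k, g k ≤ beta lam k) (hev : ∀ᶠ k in atTop, g k = beta lam k) :
    ∃ mu : YoungDiagram, beta mu = g := by
  have hnonneg : ∀ k, 0 ≤ g k + k := fun k => by
    obtain ⟨K, hK, hkK⟩ := (hev.and (eventually_ge_atTop k)).exists
    have := antitone_add_of_strictAnti hg hkK
    simp only [hK, beta] at this
    omega
  obtain ⟨mu, hmu⟩ := exists_rowLen_eq lam (r := fun k => (g k + k).toNat)
    (fun a b hab => Int.toNat_le_toNat (antitone_add_of_strictAnti hg hab))
    (fun k => by have := hle k; simp only [beta] at this; omega)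
  refine ⟨mu, funext fun k => ?_⟩
  simp only [beta, hmu]
  have := hnonneg k
  omega

lemma mem_skewCells_iff {mu lam : YoungDiagram} {k c : ℕ} :
    (k, c) ∈ skewCells mu lam ↔ mu.rowLen k ≤ c ∧ c < lam.rowLen k := by
  simp only [skewCells, Finset.mem_sdiff, YoungDiagram.mem_cells, YoungDiagram.mem_iff_lt_rowLen]
  omega

lemma filter_fst_skewCells (mu lam : YoungDiagram) (k : ℕ) :
    (skewCells mu lam).filter (·.1 = k) = {k} ×ˢ Finset.Ico (mu.rowLen k) (lam.rowLen k) := by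
  ext ⟨a, c⟩
  simp only [Finset.mem_filter, Finset.mem_product, Finset.mem_singleton, Finset.mem_Ico,
    mem_skewCells_iff]
  constructor
  · rintro ⟨h, rfl⟩; exact ⟨rfl, h⟩
  · rintro ⟨rfl, h⟩; exact ⟨h, rfl⟩

lemma card_skewCells_eq_sum {mu lam : YoungDiagram} {s : Finset ℕ}
    (hs : ∀ k ∉ s, mu.rowLen k = lam.rowLen k) :
    (skewCells mu lam).card = ∑ k ∈ s, (lam.rowLen k - mu.rowLen k) := by
  rw [Finset.card_eq_sum_card_fiberwise (f := Prod.fst) (t := s) ?_]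
  · simp only [filter_fst_skewCells, Finset.card_product, Finset.card_singleton, Nat.card_Ico,
      one_mul]
  rintro ⟨k, c⟩ hkc
  by_contra hk
  rw [Finset.mem_coe, mem_skewCells_iff, hs k hk] at hkc
  omega

def AdjWithin (D : Finset (ℕ × ℕ)) (a b : ℕ × ℕ) : Prop := a ∈ D ∧ b ∈ D ∧ Adjacent a b

instance (D : Finset (ℕ × ℕ)) : Std.Symm (AdjWithin D) :=
  ⟨fun _ _ ⟨ha, hb, hab⟩ => ⟨hb, ha, by unfold Adjacent at *; omega⟩⟩

lemma reflTransGen_adjWithin_row {mu lam : YoungDiagram} {k c d : ℕ}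
    (hc : (k, c) ∈ skewCells mu lam) (hd : (k, d) ∈ skewCells mu lam) :
    ReflTransGen (AdjWithin (skewCells mu lam)) (k, c) (k, d) := by
  wlog hcd : c ≤ d
  · exact symm (this hd hc (by omega))
  induction d, hcd using Nat.le_induction with
  | base => exact .refl
  | succ d hcd ih =>
    have hd' : (k, d) ∈ skewCells mu lam := by rw [mem_skewCells_iff] at *; omega
    exact (ih hd').tail ⟨hd', hd, Or.inl ⟨rfl, Or.inr rfl⟩⟩

lemma exists_vertical_of_reflTransGen {D : Finset (ℕ × ℕ)} {p q : ℕ × ℕ}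
    (h : ReflTransGen (AdjWithin D) p q) {k : ℕ} (hp : p.1 ≤ k) (hq : k < q.1) :
    ∃ c, (k, c) ∈ D ∧ (k + 1, c) ∈ D := by
  induction h using ReflTransGen.head_induction_on with
  | refl => omega
  | @head a b hab _ ih =>
    by_cases hb : b.1 ≤ k
    · exact ih hb
    obtain ⟨ha, hb', hadj⟩ := hab
    obtain ⟨a1, a2⟩ := a
    obtain ⟨b1, b2⟩ := b
    obtain ⟨rfl, rfl, rfl⟩ : a1 = k ∧ b1 = k + 1 ∧ a2 = b2 := by
      simp only [Adjacent] at hadj hp hb; omega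
    exact ⟨a2, ha, hb'⟩

namespace IsBeadShift

variable {mu lam : YoungDiagram} {i j k : ℕ}

lemma apply_lt {f g : ℕ → ℤ} (h : IsBeadShift f g i j) (hf : StrictAnti f) (hik : i ≤ k)
    (hkj : k ≤ j) : g k < f k := by
  rcases hkj.lt_or_eq with hkj | rfl
  · rw [h.eq_succ k hik hkj]; exact hf (lt_add_one k)
  · exact h.lt_last

lemma rowLen_eq (h : IsBeadShift (beta lam) (beta mu) i j) (hk : k < i ∨ j < k) :
    mu.rowLen k = lam.rowLen k :=
  beta_eq_beta_iff.1 <| hk.elim (h.eq_of_lt k) (h.eq_of_gt k)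

lemma rowLen_succ (h : IsBeadShift (beta lam) (beta mu) i j) (hik : i ≤ k) (hkj : k < j) :
    mu.rowLen k + 1 = lam.rowLen (k + 1) :=
  beta_eq_beta_succ_iff.1 (h.eq_succ k hik hkj)

lemma rowLen_lt (h : IsBeadShift (beta lam) (beta mu) i j) (hik : i ≤ k) (hkj : k ≤ j) :
    mu.rowLen k < lam.rowLen k :=
  beta_lt_beta_iff.1 (h.apply_lt (beta_strictAnti lam) hik hkj)

lemma rowLen_le (h : IsBeadShift (beta lam) (beta mu) i j) (k : ℕ) :
    mu.rowLen k ≤ lam.rowLen k := by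
  by_cases hk : k < i ∨ j < k
  · exact (h.rowLen_eq hk).le
  · exact (h.rowLen_lt (by omega) (by omega)).le

lemma mem_Icc_of_mem (h : IsBeadShift (beta lam) (beta mu) i j) {c : ℕ}
    (hkc : (k, c) ∈ skewCells mu lam) : i ≤ k ∧ k ≤ j := by
  by_contra hk
  rw [mem_skewCells_iff, h.rowLen_eq (by omega)] at hkc
  omega

lemma card_skewCells (h : IsBeadShift (beta lam) (beta mu) i j) :
    ((skewCells mu lam).card : ℤ) = beta lam i - beta mu j := by
  rw [card_skewCells_eq_sum (s := Finset.Icc i j) fun k hk => h.rowLen_eq (by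
    simp only [Finset.mem_Icc] at hk; omega), ← h.sum_sub]
  push_cast [h.rowLen_le]
  exact Finset.sum_congr rfl fun k _ => by simp only [beta]; ring

lemma reflTransGen_adjWithin (h : IsBeadShift (beta lam) (beta mu) i j) {p : ℕ × ℕ}
    (hp : p ∈ skewCells mu lam) :
    ReflTransGen (AdjWithin (skewCells mu lam)) (i, mu.rowLen i) p := by
  have hstart : ∀ k, i ≤ k → k ≤ j → (k, mu.rowLen k) ∈ skewCells mu lam := fun k hik hkj =>
    mem_skewCells_iff.2 ⟨le_rfl, h.rowLen_lt hik hkj⟩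
  have hdown : ∀ k, i ≤ k → k ≤ j →
      ReflTransGen (AdjWithin (skewCells mu lam)) (i, mu.rowLen i) (k, mu.rowLen k) := by
    intro k hik
    induction k, hik using Nat.le_induction with
    | base => exact fun _ => .refl
    | succ k hik ih =>
      intro hkj
      have hsucc := h.rowLen_succ hik (by omega)
      have hbelow : (k + 1, mu.rowLen k) ∈ skewCells mu lam :=
        mem_skewCells_iff.2 ⟨mu.rowLen_anti k (k + 1) k.le_succ, by omega⟩
      exact ((ih (by omega)).tail ⟨hstart k hik (by omega), hbelow, Or.inr ⟨rfl, Or.inr rfl⟩⟩).trans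
        (reflTransGen_adjWithin_row hbelow (hstart (k + 1) (by omega) hkj))
  obtain ⟨k, c⟩ := p
  obtain ⟨hik, hkj⟩ := h.mem_Icc_of_mem hp
  exact (hdown k hik hkj).trans (reflTransGen_adjWithin_row (hstart k hik hkj) hp)

lemma not_square (h : IsBeadShift (beta lam) (beta mu) i j) {a c : ℕ}
    (hac : (a, c) ∈ skewCells mu lam) (hac' : (a + 1, c + 1) ∈ skewCells mu lam) : False := by
  have hsucc := h.rowLen_succ (h.mem_Icc_of_mem hac).1 (by have := h.mem_Icc_of_mem hac'; omega)
  rw [mem_skewCells_iff] at hac hac'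
  omega

lemma rimStep {n : ℕ} (h : IsBeadShift (beta lam) (beta mu) i j)
    (hj : beta mu j = beta lam i - n) : RimStep n lam mu := by
  refine ⟨le_iff_rowLen_le.2 h.rowLen_le, by have := h.card_skewCells; omega, fun p hp q hq => ?_,
    fun ⟨a, c, hac, _, _, hac'⟩ => h.not_square hac hac'⟩
  exact (symm (h.reflTransGen_adjWithin hp)).trans (h.reflTransGen_adjWithin hq)

end IsBeadShift

lemma RimStep.exists_isBeadShift {n : ℕ} (hn : 0 < n) {lam mu : YoungDiagram}
    (h : RimStep n lam mu) :
    ∃ i j, IsBeadShift (beta lam) (beta mu) i j ∧ beta mu j = beta lam i - n := by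
  obtain ⟨hle, hcard, hconn, hsq⟩ := h
  set D := skewCells mu lam
  have hrows : (D.image Prod.fst).Nonempty := (Finset.card_pos.1 (hcard ▸ hn)).image _
  obtain ⟨⟨i, ci⟩, hpi, hi⟩ := Finset.mem_image.1 ((D.image Prod.fst).min'_mem hrows)
  obtain ⟨⟨j, cj⟩, hpj, hj⟩ := Finset.mem_image.1 ((D.image Prod.fst).max'_mem hrows)
  have hbounds : ∀ k c, (k, c) ∈ D → i ≤ k ∧ k ≤ j := fun k c hkc => by
    have := Finset.mem_image_of_mem Prod.fst hkc
    exact ⟨hi.trans_le (Finset.min'_le _ _ this), (Finset.le_max' _ _ this).trans_eq hj.symm⟩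
  have houter : ∀ k, k < i ∨ j < k → beta mu k = beta lam k := fun k hk => by
    refine beta_eq_beta_iff.2 <| le_antisymm (le_iff_rowLen_le.1 hle k) (not_lt.1 fun hlt => ?_)
    have := hbounds k _ (mem_skewCells_iff.2 ⟨le_rfl, hlt⟩)
    omega
  have hsucc : ∀ k, i ≤ k → k < j → beta mu k = beta lam (k + 1) := fun k hik hkj => by
    -- connectedness puts rows `k`, `k + 1` of the hook in a common column, and without a
    -- `2 × 2` square their overlap is a single column
    obtain ⟨c, hc, hc'⟩ := exists_vertical_of_reflTransGen (hconn _ hpi _ hpj) hik hkj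
    rw [mem_skewCells_iff] at hc hc'
    refine beta_eq_beta_succ_iff.2 <| le_antisymm (by omega) ?_
    by_contra! hgap
    have := lam.rowLen_anti k (k + 1) k.le_succ
    have := mu.rowLen_anti k (k + 1) k.le_succ
    exact hsq ⟨k, mu.rowLen k, by simp only [D, mem_skewCells_iff]; omega⟩
  have hshift : IsBeadShift (beta lam) (beta mu) i j :=
    ⟨(hbounds j cj hpj).1, fun k hk => houter k (.inl hk), hsucc,
      beta_lt_beta_iff.2 (by have := mem_skewCells_iff.1 hpj; omega),
      fun k hk => houter k (.inr hk)⟩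
  refine ⟨i, j, hshift, ?_⟩
  have hcard' : ((skewCells mu lam).card : ℤ) = n := by exact_mod_cast hcard
  linarith [hshift.card_skewCells]

lemma RimStep.beads_eq {n : ℕ} (hn : 0 < n) {lam mu : YoungDiagram} (h : RimStep n lam mu) :
    ∃ b ∈ beads lam, b - n ∉ beads lam ∧ beads mu = insert (b - n) (beads lam \ {b}) := by
  obtain ⟨i, j, hs, hj⟩ := h.exists_isBeadShift hn
  refine ⟨beta lam i, ⟨i, rfl⟩, hj ▸ hs.notMem_range (beta_strictAnti lam) (beta_strictAnti mu), ?_⟩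
  rw [← hj]
  exact hs.range_eq (beta_strictAnti lam).injective

lemma exists_rimStep_of_notMem_beads {n : ℕ} (hn : 0 < n) {lam : YoungDiagram} {b : ℤ}
    (hb : b ∈ beads lam) (hbn : b - n ∉ beads lam) :
    ∃ mu, RimStep n lam mu ∧ beads mu = insert (b - n) (beads lam \ {b}) := by
  obtain ⟨i, rfl⟩ := hb
  obtain ⟨j, g, hs, hg, hgj⟩ :=
    exists_isBeadShift (beta_strictAnti lam) (by omega : beta lam i - n < beta lam i) hbn
  obtain ⟨mu, rfl⟩ := exists_beta_eq hg (hs.apply_le (beta_strictAnti lam))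
    ((eventually_gt_atTop j).mono hs.eq_of_gt)
  exact ⟨mu, hs.rimStep hgj, hgj ▸ hs.range_eq (beta_strictAnti lam).injective⟩

lemma exists_rimStep_of_beads_eq {n : ℕ} (hn : 0 < n) {lam mu : YoungDiagram} {b₁ b₂ : ℤ}
    (hB : beads mu = insert (b₁ - n) (beads lam \ {b₁})) (hb₂ : b₂ ∈ beads lam)
    (hb₂n : b₂ - n ∉ beads lam) (hne : b₁ ≠ b₂) :
    ∃ nu, RimStep n mu nu ∧
      beads nu = insert (b₂ - n) (insert (b₁ - n) (beads lam \ {b₁}) \ {b₂}) := by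
  rw [← hB]
  refine exists_rimStep_of_notMem_beads hn ?_ ?_ <;>
    simp only [hB, Set.mem_insert_iff, Set.mem_sdiff, Set.mem_singleton_iff]
  · exact .inr ⟨hb₂, Ne.symm hne⟩
  · rintro (h | ⟨h, -⟩)
    · omega
    · exact hb₂n h

lemma rimStep_diamond {n : ℕ} (hn : 0 < n) {lam mu₁ mu₂ : YoungDiagram}
    (h₁ : RimStep n lam mu₁) (h₂ : RimStep n lam mu₂) :
    ∃ nu, ReflGen (RimStep n) mu₁ nu ∧ ReflTransGen (RimStep n) mu₂ nu := by
  obtain ⟨b₁, hb₁, hb₁n, hB₁⟩ := h₁.beads_eq hn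
  obtain ⟨b₂, hb₂, hb₂n, hB₂⟩ := h₂.beads_eq hn
  by_cases hb : b₁ = b₂
  · obtain rfl : mu₁ = mu₂ := eq_of_beads_eq (hB₁.trans (hb ▸ hB₂.symm))
    exact ⟨mu₁, .refl, .refl⟩
  obtain ⟨nu₁, hnu₁, hC₁⟩ := exists_rimStep_of_beads_eq hn hB₁ hb₂ hb₂n hb
  obtain ⟨nu₂, hnu₂, hC₂⟩ := exists_rimStep_of_beads_eq hn hB₂ hb₁ hb₁n (Ne.symm hb)
  have hnu : nu₁ = nu₂ := eq_of_beads_eq <| by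
    rw [hC₁, hC₂, insert_diff_singleton_comm (by rintro rfl; exact hb₁n hb₂)
      (by rintro rfl; exact hb₂n hb₁)]
  exact ⟨nu₁, .single hnu₁, .single (hnu ▸ hnu₂)⟩

lemma IsCore.eq_of_reflTransGen {n : ℕ} {t s : YoungDiagram} (ht : IsCore n t)
    (h : ReflTransGen (RimStep n) t s) : s = t :=
  (h.cases_head.resolve_right fun ⟨c, hc, _⟩ => ht ⟨c, hc⟩).symm

/-- For any partition `rho` and positive integer `n`, the `n`-core of `rho` is
well-defined: any two maximal sequences of legal `n`-rim hook removals from `rho` terminate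
at the same partition. -/
theorem ncore_well_defined (n : ℕ) (hn : 0 < n) (rho t1 t2 : YoungDiagram)
    (h1 : Relation.ReflTransGen (RimStep n) rho t1) (hc1 : IsCore n t1)
    (h2 : Relation.ReflTransGen (RimStep n) rho t2) (hc2 : IsCore n t2) :
    t1 = t2 := by
  obtain ⟨t, ht1, ht2⟩ := church_rosser (fun _ _ _ => rimStep_diamond hn) h1 h2
  rw [← hc1.eq_of_reflTransGen ht1, ← hc2.eq_of_reflTransGen ht2]

end QCGrass
end

section
/- Let m×M and n×N be rectangular partitions contained in the l×k rectangle, with m+n ≤ l or M+N ≤ k (so that the cohomology product σ_{m×M}·σ_{n×N} in Gr(l,l+k) is nonzero). Then every partition γ ⊆ l×k with c^γ_{m×M,n×N} ≠ 0 contains the union of shapes (m×M) ∪ (n×N) ∪ ((m+n)×(M+N−k)) ∪ ((m+n−l)×(M+N)), where a rectangle is omitted if one of its dimensions is nonpositive or it does not fit inside l×k; moreover this union is itself the intersection of all such γ. -/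
/-!
Let `T` be a Littlewood–Richardson tableau of shape `γ / (m × M)` and content `n × N`. Its
entries `i + 1` lie in rows `≥ i`, so `n × N ⊆ γ`. The entries `i + 1` to the right of column
`M` are forced into row `i`; the lattice condition pushes the remaining ones down, diagonal by
diagonal, onto entries `n` sitting in distinct columns of row `m + n - 1 - i`. Hence
`γᵢ + γ_{m+n-1-i} ≥ M + N` for `i < min m n`, and with `γ ⊆ l × k` this forces the two extra
rectangles into `γ`.

Conversely, every row of the union is attained by one of the shapes `γ(t, a)`, obtained from
`(m × M) ∪ (n × N)` by completing `t` rows to length `M + N` and moving `a` columns from the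
bottom rows to the top `min m n` rows; each carries an explicit Littlewood–Richardson tableau.
-/

open YoungDiagram

namespace YoungDiagram

theorem rowLen_eq_of_forall_mem_iff {μ : YoungDiagram} {i c : ℕ}
    (h : ∀ j, (i, j) ∈ μ ↔ j < c) : μ.rowLen i = c :=
  eq_of_forall_lt_iff fun j => by rw [← mem_iff_lt_rowLen, h]

theorem le_iff_forall_rowLen_le {μ ν : YoungDiagram} :
    μ ≤ ν ↔ ∀ i, μ.rowLen i ≤ ν.rowLen i :=
  ⟨fun h _ => le_of_forall_lt fun _ hj => mem_iff_lt_rowLen.1 (h (mem_iff_lt_rowLen.2 hj)),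
    fun h p hp => mem_iff_lt_rowLen.2 ((mem_iff_lt_rowLen.1 hp).trans_le (h p.1))⟩

theorem rowLen_sup (μ ν : YoungDiagram) (i : ℕ) :
    (μ ⊔ ν).rowLen i = max (μ.rowLen i) (ν.rowLen i) :=
  rowLen_eq_of_forall_mem_iff fun j => by
    rw [mem_sup, mem_iff_lt_rowLen, mem_iff_lt_rowLen, lt_max_iff]

theorem rowLen_bot (i : ℕ) : (⊥ : YoungDiagram).rowLen i = 0 :=
  rowLen_eq_of_forall_mem_iff fun j => by simp [notMem_bot]

end YoungDiagram

namespace QCGrass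

theorem mem_rect {m M : ℕ} {p : ℕ × ℕ} : p ∈ rect m M ↔ p.1 < m ∧ p.2 < M := by
  simp [← mem_cells, rect]

theorem rowLen_rect (m M i : ℕ) : (rect m M).rowLen i = if i < m then M else 0 :=
  rowLen_eq_of_forall_mem_iff fun j => by rw [mem_rect]; split_ifs <;> simp [*]

theorem rect_le_iff {m M : ℕ} {μ : YoungDiagram} :
    rect m M ≤ μ ↔ ∀ i < m, M ≤ μ.rowLen i := by
  rw [le_iff_forall_rowLen_le]
  refine forall_congr' fun i => ?_
  rw [rowLen_rect]
  split_ifs <;> simp [*]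

theorem mem_skewCells {lam nu : YoungDiagram} {p : ℕ × ℕ} :
    p ∈ skewCells lam nu ↔ p ∈ nu ∧ p ∉ lam := by
  simp [skewCells]

theorem exists_first_in_reading_order {A : Finset (ℕ × ℕ)} (hA : A.Nonempty) :
    ∃ q ∈ A, ∀ p ∈ A, q.1 < p.1 ∨ (q.1 = p.1 ∧ p.2 ≤ q.2) := by
  obtain ⟨q, hq, hmin⟩ := A.exists_min_image (fun p => toLex (p.1, OrderDual.toDual p.2)) hA
  exact ⟨q, hq, fun p hp => Prod.Lex.toLex_le_toLex.1 (hmin p hp)⟩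

def countFromRow (lam nu : YoungDiagram) (T : ℕ × ℕ → ℕ) (v r : ℕ) : ℕ :=
  ((skewCells lam nu).filter fun p => T p = v ∧ r ≤ p.1).card

namespace IsLRTableau

variable {lam mu nu : YoungDiagram} {T : ℕ × ℕ → ℕ}

theorem exists_lt_row_of_eq_add_two (hT : IsLRTableau lam mu nu T) {i j v : ℕ}
    (hp : (i, j) ∈ skewCells lam nu) (hv : T (i, j) = v + 2) :
    ∃ q ∈ skewCells lam nu, T q = v + 1 ∧ q.1 < i := by
  obtain ⟨-, -, hrow, -, -, hlat⟩ := hT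
  have hpos : 0 < ((skewCells lam nu).filter
      fun q => T q = v + 2 ∧ (q.1 < i ∨ (q.1 = i ∧ j ≤ q.2))).card :=
    Finset.card_pos.2 ⟨(i, j), Finset.mem_filter.2 ⟨hp, hv, Or.inr ⟨rfl, le_rfl⟩⟩⟩
  obtain ⟨⟨i', j'⟩, hq⟩ := Finset.card_pos.1 (hpos.trans_le (hlat i j v))
  obtain ⟨hqS, hqv, hlt | ⟨hii', hjj'⟩⟩ := Finset.mem_filter.1 hq
  · exact ⟨(i', j'), hqS, hqv, hlt⟩
  · dsimp only at hii' hjj'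
    subst hii'
    have := hrow i' j j' hjj' hp hqS
    omega

theorem le_row_add_one (hT : IsLRTableau lam mu nu T) {p : ℕ × ℕ}
    (hp : p ∈ skewCells lam nu) : T p ≤ p.1 + 1 := by
  induction hr : p.1 using Nat.strong_induction_on generalizing p with
  | _ r ih =>
    obtain h | ⟨v, hv⟩ : T p ≤ 1 ∨ ∃ v, T p = v + 2 :=
      (le_or_gt (T p) 1).imp_right fun h => ⟨T p - 2, by omega⟩
    · omega
    · obtain ⟨q, hq, hqv, hqp⟩ := hT.exists_lt_row_of_eq_add_two hp hv
      have := ih q.1 (hr ▸ hqp) hq rfl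
      omega

theorem row_add_one_le_of_notMem (hT : IsLRTableau lam mu nu T) {r j : ℕ}
    (hj : (0, j) ∉ lam) (hp : (r, j) ∈ skewCells lam nu) : r + 1 ≤ T (r, j) := by
  obtain ⟨-, hsupp, -, hcol, -, -⟩ := hT
  induction r with
  | zero => exact (hsupp _).2 hp
  | succ r ih =>
    have hp' : (r, j) ∈ skewCells lam nu :=
      mem_skewCells.2 ⟨nu.up_left_mem (Nat.le_succ r) le_rfl (mem_skewCells.1 hp).1,
        fun h => hj (lam.up_left_mem (Nat.zero_le r) le_rfl h)⟩
    have := hcol r (r + 1) j (Nat.lt_succ_self r) hp' hp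
    have := ih hp'
    omega

theorem card_le_rowLen (hT : IsLRTableau lam mu nu T) {F : Finset (ℕ × ℕ)} {v r : ℕ}
    (hF : F ⊆ skewCells lam nu) (hv : ∀ p ∈ F, T p = v) (hr : ∀ p ∈ F, r ≤ p.1) :
    F.card ≤ nu.rowLen r := by
  obtain ⟨-, -, -, hcol, -, -⟩ := hT
  have hsame : ∀ p ∈ F, ∀ q ∈ F, p.2 = q.2 → ¬ p.1 < q.1 := by
    rintro ⟨i, j⟩ hp ⟨i', j'⟩ hq (rfl : j = j') (hlt : i < i')
    have := hcol i i' j hlt (hF hp) (hF hq)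
    rw [hv _ hp, hv _ hq] at this
    exact lt_irrefl v this
  rw [← Finset.card_range (nu.rowLen r)]
  refine Finset.card_le_card_of_injOn Prod.snd (fun p hp => ?_) fun p hp q hq hpq => ?_
  · have := mem_iff_lt_rowLen.1 (mem_skewCells.1 (hF hp)).1
    simpa using this.trans_le (nu.rowLen_anti _ _ (hr p hp))
  · have := hsame p hp q hq hpq
    have := hsame q hq p hp hpq.symm
    exact Prod.ext (by omega) hpq

theorem card_eq_rowLen (hT : IsLRTableau lam mu nu T) (v : ℕ) :
    ((skewCells lam nu).filter fun p => T p = v + 1).card = mu.rowLen v :=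
  hT.2.2.2.2.1 v

theorem rowLen_le (hT : IsLRTableau lam mu nu T) (r : ℕ) : mu.rowLen r ≤ nu.rowLen r := by
  rw [← hT.card_eq_rowLen r]
  refine hT.card_le_rowLen (Finset.filter_subset _ _) (fun p hp => (Finset.mem_filter.1 hp).2)
    fun p hp => ?_
  obtain ⟨hpS, hpv⟩ := Finset.mem_filter.1 hp
  have := hT.le_row_add_one hpS
  omega

/-- The lattice condition read backwards: past position `(i, j)` of the reading word. -/
theorem card_suffix_le (hT : IsLRTableau lam mu nu T) {v : ℕ}
    (hmu : mu.rowLen v ≤ mu.rowLen (v + 1)) (i j : ℕ) :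
    ((skewCells lam nu).filter
        fun p => T p = v + 1 ∧ ¬ (p.1 < i ∨ (p.1 = i ∧ j ≤ p.2))).card ≤
      ((skewCells lam nu).filter
        fun p => T p = v + 2 ∧ ¬ (p.1 < i ∨ (p.1 = i ∧ j ≤ p.2))).card := by
  obtain ⟨-, -, -, -, hcont, hlat⟩ := hT
  have hsplit : ∀ w, ((skewCells lam nu).filter
      fun p => T p = w ∧ (p.1 < i ∨ (p.1 = i ∧ j ≤ p.2))).card +
      ((skewCells lam nu).filter fun p => T p = w ∧ ¬ (p.1 < i ∨ (p.1 = i ∧ j ≤ p.2))).card =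
      ((skewCells lam nu).filter fun p => T p = w).card := fun w => by
    rw [← Finset.filter_filter, ← Finset.filter_filter]
    exact Finset.card_filter_add_card_filter_not _
  have h₁ := hsplit (v + 1)
  have h₂ := hsplit (v + 2)
  rw [hcont] at h₁ h₂
  have := hlat i j v
  omega

theorem countFromRow_le_countFromRow_succ (hT : IsLRTableau lam mu nu T) {v : ℕ}
    (hmu : mu.rowLen v ≤ mu.rowLen (v + 1)) (r : ℕ) :
    countFromRow lam nu T (v + 1) r ≤ countFromRow lam nu T (v + 2) (r + 1) := by
  unfold countFromRow
  set A := (skewCells lam nu).filter fun p => T p = v + 1 ∧ r ≤ p.1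
  rcases A.eq_empty_or_nonempty with hA | hA
  · simp [hA]
  obtain ⟨⟨i, j⟩, hqA, hfirst⟩ := exists_first_in_reading_order hA
  obtain ⟨hqS, hqv, hqr⟩ := Finset.mem_filter.1 hqA
  have hrow := hT.2.2.1
  calc A.card
      ≤ ((skewCells lam nu).filter
          fun p => T p = v + 1 ∧ ¬ (p.1 < i ∨ (p.1 = i ∧ j + 1 ≤ p.2))).card := by
        refine Finset.card_le_card fun p hp => ?_
        have := hfirst p hp
        obtain ⟨hpS, hpv, -⟩ := Finset.mem_filter.1 hp
        exact Finset.mem_filter.2 ⟨hpS, hpv, by simp only at this; omega⟩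
    _ ≤ ((skewCells lam nu).filter
          fun p => T p = v + 2 ∧ ¬ (p.1 < i ∨ (p.1 = i ∧ j + 1 ≤ p.2))).card :=
        hT.card_suffix_le hmu i (j + 1)
    _ ≤ _ := by
        refine Finset.card_le_card fun ⟨i', j'⟩ hp => ?_
        obtain ⟨hpS, hpv, hpos⟩ := Finset.mem_filter.1 hp
        refine Finset.mem_filter.2 ⟨hpS, hpv, ?_⟩
        simp only at hpos hqr ⊢
        by_contra hlt
        obtain rfl : i' = i := by omega
        have := hrow i' j' j (by omega) hpS hqS
        omega

theorem countFromRow_le_countFromRow_add (hT : IsLRTableau lam mu nu T) {v d : ℕ}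
    (hmu : mu.rowLen v ≤ mu.rowLen (v + d)) (r : ℕ) :
    countFromRow lam nu T (v + 1) r ≤ countFromRow lam nu T (v + d + 1) (r + d) := by
  induction d with
  | zero => rfl
  | succ d ih =>
    rw [← Nat.add_assoc] at hmu
    have hd := mu.rowLen_anti (v + d) (v + d + 1) (by omega)
    have h0 := mu.rowLen_anti v (v + d) (by omega)
    exact (ih (hmu.trans hd)).trans
      (hT.countFromRow_le_countFromRow_succ (v := v + d) (by omega) (r + d))

/-- The `N` entries `i + 1` fill row `i` from column `M` on; the rest lie below row `m`, and
pushing them down to the entries `n` puts them in distinct columns of row `m + n - 1 - i`. -/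
theorem add_le_rowLen_add_rowLen {m M n N : ℕ} {γ : YoungDiagram}
    (hT : IsLRTableau (rect m M) (rect n N) γ T) {i : ℕ} (him : i < m) (hin : i < n) :
    M + N ≤ γ.rowLen i + γ.rowLen (m + n - 1 - i) := by
  set D := (skewCells (rect m M) γ).filter fun p => T p = i + 1
  have hD : D.card = N := by rw [hT.card_eq_rowLen, rowLen_rect, if_pos hin]
  have hM : M ≤ γ.rowLen i := rect_le_iff.1 hT.1 i him
  have hright : (D.filter fun p => M ≤ p.2).card ≤ γ.rowLen i - M := by
    calc _ ≤ ({i} ×ˢ Finset.Ico M (γ.rowLen i)).card := by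
          refine Finset.card_le_card fun ⟨r, j⟩ hp => ?_
          obtain ⟨⟨hpS, hpv⟩, hjM⟩ := Finset.mem_filter.1 hp |>.imp_left Finset.mem_filter.1
          have h₁ := hT.row_add_one_le_of_notMem (by simp [mem_rect]; omega) hpS
          have h₂ := hT.le_row_add_one hpS
          have h₃ := mem_iff_lt_rowLen.1 (mem_skewCells.1 hpS).1
          rw [hpv] at h₁ h₂
          obtain rfl : r = i := by omega
          simpa using ⟨hjM, h₃⟩
      _ = _ := by simp
  have hleft : (D.filter fun p => ¬ M ≤ p.2).card ≤ countFromRow (rect m M) γ T (i + 1) m := by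
    refine Finset.card_le_card fun p hp => ?_
    obtain ⟨⟨hpS, hpv⟩, hjM⟩ := Finset.mem_filter.1 hp |>.imp_left Finset.mem_filter.1
    have := (mem_skewCells.1 hpS).2
    rw [mem_rect] at this
    exact Finset.mem_filter.2 ⟨hpS, hpv, by omega⟩
  have hpush : countFromRow (rect m M) γ T (i + 1) m ≤
      countFromRow (rect m M) γ T n (m + n - 1 - i) := by
    have := hT.countFromRow_le_countFromRow_add (v := i) (d := n - 1 - i)
      (by simp only [rowLen_rect]; split_ifs <;> omega) m
    rwa [show i + (n - 1 - i) + 1 = n by omega, show m + (n - 1 - i) = m + n - 1 - i by omega]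
      at this
  have hlast : countFromRow (rect m M) γ T n (m + n - 1 - i) ≤ γ.rowLen (m + n - 1 - i) :=
    hT.card_le_rowLen (Finset.filter_subset _ _) (fun p hp => (Finset.mem_filter.1 hp).2.1)
      fun p hp => (Finset.mem_filter.1 hp).2.2
  have := Finset.card_filter_add_card_filter_not (s := D) (p := fun p => M ≤ p.2)
  omega

end IsLRTableau

/-- A prefix of the reading word ending in row `i` lies between rows `< i` and rows `≤ i`. -/
theorem lattice_of_card_rows_le (S : Finset (ℕ × ℕ)) (T : ℕ × ℕ → ℕ)
    (h : ∀ i r, (S.filter fun p => T p = r + 2 ∧ p.1 < i + 1).card ≤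
      (S.filter fun p => T p = r + 1 ∧ p.1 < i).card) (i j r : ℕ) :
    (S.filter fun p => T p = r + 2 ∧ (p.1 < i ∨ (p.1 = i ∧ j ≤ p.2))).card ≤
      (S.filter fun p => T p = r + 1 ∧ (p.1 < i ∨ (p.1 = i ∧ j ≤ p.2))).card :=
  calc _ ≤ (S.filter fun p => T p = r + 2 ∧ p.1 < i + 1).card :=
        Finset.card_le_card <| Finset.monotone_filter_right S fun _ _ => by omega
    _ ≤ _ := h i r
    _ ≤ _ := Finset.card_le_card <| Finset.monotone_filter_right S fun _ _ => by omega

theorem finite_isLRTableau (lam mu nu : YoungDiagram) :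
    Finite {T : ℕ × ℕ → ℕ // IsLRTableau lam mu nu T} := by
  have hbound : ∀ T, IsLRTableau lam mu nu T → ∀ p, T p ≤ mu.colLen 0 := fun T hT p => by
    obtain h | ⟨v, hv⟩ : T p = 0 ∨ ∃ v, T p = v + 1 :=
      (Nat.eq_zero_or_pos _).imp_right fun h => ⟨T p - 1, by omega⟩
    · omega
    · have hp : p ∈ skewCells lam nu := (hT.2.1 p).1 (by omega)
      have hpos : 0 < mu.rowLen v := hT.card_eq_rowLen v ▸
        Finset.card_pos.2 ⟨p, Finset.mem_filter.2 ⟨hp, hv⟩⟩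
      have := mem_iff_lt_colLen.1 (mem_iff_lt_rowLen.2 hpos)
      omega
  refine Finite.of_injective (β := skewCells lam nu → Fin (mu.colLen 0 + 1))
    (fun T p => ⟨min (T.1 p) (mu.colLen 0), by omega⟩) fun T₁ T₂ h => Subtype.ext ?_
  funext p
  by_cases hp : p ∈ skewCells lam nu
  · have := congrArg Fin.val (congrFun h ⟨p, hp⟩)
    have := hbound T₁.1 T₁.2 p
    have := hbound T₂.1 T₂.2 p
    simp only at *
    omega
  · have h₁ := mt (T₁.2.2.1 p).1 hp
    have h₂ := mt (T₂.2.2.1 p).1 hp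
    omega

theorem lrCoeff_ne_zero_of_isLRTableau {lam mu nu : YoungDiagram} {T : ℕ × ℕ → ℕ}
    (hT : IsLRTableau lam mu nu T) : lrCoeff lam mu nu ≠ 0 :=
  Nat.card_ne_zero.2 ⟨⟨⟨T, hT⟩⟩, finite_isLRTableau lam mu nu⟩

theorem card_filter_singleton_product_fst_lt (x i : ℕ) (B : Finset ℕ) :
    (({x} ×ˢ B).filter fun p => p.1 < i).card = if x < i then B.card else 0 := by
  rw [Finset.filter_product_left (fun x => x < i), Finset.filter_singleton]
  split_ifs <;> simp

section Witness

variable {m M n N t a : ℕ}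

def witnessRowLen (m M n N t a i : ℕ) : ℕ :=
  if i < t then M + N
  else if i < min m n then max M N + a
  else if i < m then M
  else if i < n then N
  else if i < m + n - t then min M N - a
  else 0

/-- The shape `γ(t, a)`: the union of `m × M` and `n × N` with `t` rows completed to length
`M + N` and `a` columns moved from the bottom rows to the top `min m n` rows. -/
def witness (m M n N t a : ℕ) : YoungDiagram :=
  rect t (M + N) ⊔ rect (min m n) (max M N + a) ⊔ rect m M ⊔ rect n N ⊔
    rect (m + n - t) (min M N - a)

theorem rowLen_witness (ht : t ≤ min m n) (ha : a ≤ min M N) (i : ℕ) :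
    (witness m M n N t a).rowLen i = witnessRowLen m M n N t a i := by
  simp only [witness, rowLen_sup, rowLen_rect, witnessRowLen]
  split_ifs <;> omega

theorem mem_skewCells_witness (ht : t ≤ min m n) (ha : a ≤ min M N) {i j : ℕ} :
    (i, j) ∈ skewCells (rect m M) (witness m M n N t a) ↔
      j < witnessRowLen m M n N t a i ∧ (m ≤ i ∨ M ≤ j) := by
  rw [mem_skewCells, mem_iff_lt_rowLen, rowLen_witness ht ha, mem_rect]
  omega

theorem le_witnessRowLen {i : ℕ} (hi : i < m) :
    M ≤ witnessRowLen m M n N t a i := by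
  unfold witnessRowLen; split_ifs <;> omega

theorem sub_le_witnessRowLen {i : ℕ}
    (hi : i < m + n - t) : min M N - a ≤ witnessRowLen m M n N t a i := by
  unfold witnessRowLen; split_ifs <;> omega

theorem witnessRowLen_eq_zero (ht : t ≤ min m n) {i : ℕ} (hi : m + n - t ≤ i) :
    witnessRowLen m M n N t a i = 0 := by
  unfold witnessRowLen; split_ifs <;> omega

/-- Below row `m`, the first `min M N - a` cells of row `i` take the entries `i + 1 + t - m`
that do not fit into row `i + t - m`. -/
def witnessTableau (m M n N t a : ℕ) (p : ℕ × ℕ) : ℕ :=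
  if p ∈ skewCells (rect m M) (witness m M n N t a) then
    if p.2 < min M N - a then p.1 + 1 + t - m else p.1 + 1
  else 0

def witnessUpperStart (m M N a v : ℕ) : ℕ := if v < m then M else min M N - a

def witnessLowerLen (M n N t a v : ℕ) : ℕ := if t ≤ v ∧ v < n then min M N - a else 0

theorem filter_witnessTableau_eq_add_one (ht : t ≤ min m n) (ha : a ≤ min M N) (v : ℕ) :
    (skewCells (rect m M) (witness m M n N t a)).filter
        (fun p => witnessTableau m M n N t a p = v + 1) =
      {v} ×ˢ Finset.Ico (witnessUpperStart m M N a v) (witnessRowLen m M n N t a v) ∪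
        {m + v - t} ×ˢ Finset.range (witnessLowerLen M n N t a v) := by
  ext ⟨i, j⟩
  have hmin : min M N - a ≤ M := (Nat.sub_le _ _).trans (min_le_left M N)
  simp only [Finset.mem_filter, Finset.mem_union, Finset.mem_product, Finset.mem_singleton,
    Finset.mem_Ico, Finset.mem_range, witnessUpperStart, witnessLowerLen]
  constructor
  · rintro ⟨hS, hT⟩
    rw [witnessTableau, if_pos hS] at hT
    rw [mem_skewCells_witness ht ha] at hS
    by_cases hj : j < min M N - a
    · have hi : i < m + n - t := by
        by_contra hi
        rw [witnessRowLen_eq_zero ht (by omega)] at hS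
        omega
      rw [if_pos hj] at hT
      right
      rw [if_pos (by omega)]
      omega
    · rw [if_neg hj] at hT
      left
      obtain rfl : i = v := by omega
      split_ifs <;> omega
  · rintro (⟨rfl, hj₁, hj₂⟩ | ⟨rfl, hj⟩)
    · have hS : (i, j) ∈ skewCells (rect m M) (witness m M n N t a) := by
        rw [mem_skewCells_witness ht ha]
        split_ifs at hj₁ <;> omega
      refine ⟨hS, ?_⟩
      rw [witnessTableau, if_pos hS, if_neg (by split_ifs at hj₁ <;> omega)]
    · split_ifs at hj with hv
      · have hS : (m + v - t, j) ∈ skewCells (rect m M) (witness m M n N t a) := by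
          rw [mem_skewCells_witness ht ha]
          exact ⟨hj.trans_le (sub_le_witnessRowLen (by omega)), by omega⟩
        refine ⟨hS, ?_⟩
        rw [witnessTableau, if_pos hS, if_pos hj]
        omega
      · omega

theorem disjoint_witness_segments (v : ℕ) :
    Disjoint ({v} ×ˢ Finset.Ico (witnessUpperStart m M N a v) (witnessRowLen m M n N t a v))
      ({m + v - t} ×ˢ Finset.range (witnessLowerLen M n N t a v)) := by
  rw [Finset.disjoint_left]
  rintro ⟨i, j⟩ h₁ h₂
  simp only [Finset.mem_product, Finset.mem_singleton, Finset.mem_Ico, Finset.mem_range,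
    witnessUpperStart, witnessLowerLen] at h₁ h₂
  split_ifs at h₁ h₂ <;> omega

theorem witnessRowLen_sub_add_witnessLowerLen (ht : t ≤ min m n) (ha : a ≤ min M N) (v : ℕ) :
    witnessRowLen m M n N t a v - witnessUpperStart m M N a v + witnessLowerLen M n N t a v =
      if v < n then N else 0 := by
  unfold witnessRowLen witnessUpperStart witnessLowerLen
  split_ifs <;> omega

theorem card_filter_witnessTableau_eq_add_one (ht : t ≤ min m n) (ha : a ≤ min M N) (v : ℕ) :
    ((skewCells (rect m M) (witness m M n N t a)).filter
        (fun p => witnessTableau m M n N t a p = v + 1)).card = (rect n N).rowLen v := by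
  rw [filter_witnessTableau_eq_add_one ht ha, Finset.card_union_of_disjoint
    (disjoint_witness_segments v), Finset.card_product, Finset.card_product,
    Finset.card_singleton, Finset.card_singleton, Nat.card_Ico, Finset.card_range, one_mul,
    one_mul, witnessRowLen_sub_add_witnessLowerLen ht ha, rowLen_rect]

theorem card_filter_witnessTableau_eq_add_one_row_lt (ht : t ≤ min m n) (ha : a ≤ min M N)
    (v i : ℕ) :
    ((skewCells (rect m M) (witness m M n N t a)).filter
        (fun p => witnessTableau m M n N t a p = v + 1 ∧ p.1 < i)).card =
      (if v < i then witnessRowLen m M n N t a v - witnessUpperStart m M N a v else 0) +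
        (if m + v - t < i then witnessLowerLen M n N t a v else 0) := by
  rw [← Finset.filter_filter, filter_witnessTableau_eq_add_one ht ha, Finset.filter_union,
    Finset.card_union_of_disjoint ((disjoint_witness_segments v).mono
      (Finset.filter_subset _ _) (Finset.filter_subset _ _)),
    card_filter_singleton_product_fst_lt, card_filter_singleton_product_fst_lt, Nat.card_Ico,
    Finset.card_range]

theorem card_filter_witnessTableau_add_two_le (ht : t ≤ min m n) (ha : a ≤ min M N) (i r : ℕ) :
    ((skewCells (rect m M) (witness m M n N t a)).filter
        (fun p => witnessTableau m M n N t a p = r + 2 ∧ p.1 < i + 1)).card ≤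
      ((skewCells (rect m M) (witness m M n N t a)).filter
        (fun p => witnessTableau m M n N t a p = r + 1 ∧ p.1 < i)).card := by
  refine (card_filter_witnessTableau_eq_add_one_row_lt ht ha (r + 1) (i + 1)).trans_le ?_
  rw [card_filter_witnessTableau_eq_add_one_row_lt ht ha r i]
  have h₁ := witnessRowLen_sub_add_witnessLowerLen (m := m) (M := M) (N := N) ht ha r
  have h₂ := witnessRowLen_sub_add_witnessLowerLen (m := m) (M := M) (N := N) ht ha (r + 1)
  have hlow : r + 1 < n → witnessLowerLen M n N t a r ≤ witnessLowerLen M n N t a (r + 1) := by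
    unfold witnessLowerLen
    split_ifs <;> omega
  split_ifs at * <;> omega

theorem isLRTableau_witnessTableau (ht : t ≤ min m n) (ha : a ≤ min M N) :
    IsLRTableau (rect m M) (rect n N) (witness m M n N t a) (witnessTableau m M n N t a) := by
  refine ⟨?_, fun ⟨i, j⟩ => ?_, fun i j j' hjj h₁ h₂ => ?_, fun i i' j hii h₁ h₂ => ?_,
    card_filter_witnessTableau_eq_add_one ht ha,
    lattice_of_card_rows_le _ _ (card_filter_witnessTableau_add_two_le ht ha)⟩
  · refine le_iff_forall_rowLen_le.2 fun i => ?_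
    rw [rowLen_rect, rowLen_witness ht ha]
    split_ifs with hi
    · exact le_witnessRowLen hi
    · exact Nat.zero_le _
  · by_cases hS : (i, j) ∈ skewCells (rect m M) (witness m M n N t a)
    · simp only [witnessTableau, hS, if_true, iff_true]
      rw [mem_skewCells_witness ht ha] at hS
      split_ifs <;> omega
    · simp [witnessTableau, hS]
  · rw [witnessTableau, witnessTableau, if_pos h₁, if_pos h₂]
    rw [mem_skewCells_witness ht ha] at h₁ h₂
    split_ifs <;> omega
  · rw [witnessTableau, witnessTableau, if_pos h₁, if_pos h₂]
    rw [mem_skewCells_witness ht ha] at h₁ h₂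
    split_ifs <;> omega

end Witness

def rectUnion (l k m M n N : ℕ) : YoungDiagram :=
  rect m M ⊔ rect n N ⊔ (if m + n ≤ l then rect (m + n) (M + N - k) else ⊥) ⊔
    (if M + N ≤ k then rect (m + n - l) (M + N) else ⊥)

theorem rowLen_rectUnion (l k m M n N i : ℕ) :
    (rectUnion l k m M n N).rowLen i =
      max (max (max (if i < m then M else 0) (if i < n then N else 0))
        (if m + n ≤ l ∧ i < m + n then M + N - k else 0))
        (if M + N ≤ k ∧ i < m + n - l then M + N else 0) := by
  simp only [rectUnion, rowLen_sup, apply_ite (rowLen · i), rowLen_rect, rowLen_bot]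
  split_ifs <;> omega

section RectUnion

variable {l k m M n N : ℕ}

theorem rectUnion_le_of_lrCoeff_ne_zero (hm : m ≤ l) (hM : M ≤ k) (hn : n ≤ l) (hN : N ≤ k)
    {γ : YoungDiagram} (hγ : γ ≤ rect l k) (hc : lrCoeff (rect m M) (rect n N) γ ≠ 0) :
    rectUnion l k m M n N ≤ γ := by
  obtain ⟨⟨T, hT⟩⟩ := (Nat.card_ne_zero.1 hc).1
  have hγk : ∀ i, γ.rowLen i ≤ if i < l then k else 0 := fun i =>
    rowLen_rect l k i ▸ le_iff_forall_rowLen_le.1 hγ i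
  have hMγ : ∀ i < m, M ≤ γ.rowLen i := rect_le_iff.1 hT.1
  have hNγ : ∀ i < n, N ≤ γ.rowLen i := rect_le_iff.1 (le_iff_forall_rowLen_le.2 hT.rowLen_le)
  have hthird : rect (m + n) (M + N - k) ≤ γ := rect_le_iff.2 fun i hi => by
    by_cases him : i < m
    · have := hMγ i him; omega
    by_cases hin : i < n
    · have := hNγ i hin; omega
    have hpair := hT.add_le_rowLen_add_rowLen (i := m + n - 1 - i) (by omega) (by omega)
    rw [show m + n - 1 - (m + n - 1 - i) = i by omega] at hpair
    have := hγk (m + n - 1 - i)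
    split_ifs at this <;> omega
  have hfourth : rect (m + n - l) (M + N) ≤ γ := rect_le_iff.2 fun i hi => by
    have hpair := hT.add_le_rowLen_add_rowLen (i := i) (by omega) (by omega)
    have := hγk (m + n - 1 - i)
    rw [if_neg (by omega)] at this
    omega
  refine sup_le (sup_le (sup_le (rect_le_iff.2 hMγ) (rect_le_iff.2 hNγ)) ?_) ?_ <;> split_ifs
  exacts [hthird, bot_le, hfourth, bot_le]

theorem exists_rowLen_le_rowLen_rectUnion (hm : m ≤ l) (hM : M ≤ k) (hn : n ≤ l) (hN : N ≤ k)
    (hnz : m + n ≤ l ∨ M + N ≤ k) (i : ℕ) :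
    ∃ γ, γ ≤ rect l k ∧ lrCoeff (rect m M) (rect n N) γ ≠ 0 ∧
      γ.rowLen i ≤ (rectUnion l k m M n N).rowLen i := by
  obtain ⟨t, a, ht, ha, hle, hi⟩ : ∃ t a, t ≤ min m n ∧ a ≤ min M N ∧
      (∀ j, witnessRowLen m M n N t a j ≤ (rect l k).rowLen j) ∧
      witnessRowLen m M n N t a i ≤ (rectUnion l k m M n N).rowLen i := by
    simp only [rowLen_rect, rowLen_rectUnion]
    unfold witnessRowLen
    -- Rows above `max m n` are shortest for `a = 0` and `t` as small as `l` rows allow,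
    -- rows below it for `a` as large as `k` columns allow.
    by_cases hk : M + N ≤ k <;> by_cases hi : i < max m n
    · exact ⟨m + n - l, 0, by omega, by omega, fun j => by split_ifs <;> omega,
        by split_ifs <;> omega⟩
    · exact ⟨0, min M N, by omega, by omega, fun j => by split_ifs <;> omega,
        by split_ifs <;> omega⟩
    · exact ⟨0, 0, by omega, by omega, fun j => by split_ifs <;> omega, by split_ifs <;> omega⟩
    · exact ⟨0, k - max M N, by omega, by omega, fun j => by split_ifs <;> omega,
        by split_ifs <;> omega⟩
  refine ⟨witness m M n N t a, le_iff_forall_rowLen_le.2 fun j => ?_,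
    lrCoeff_ne_zero_of_isLRTableau (isLRTableau_witnessTableau ht ha), ?_⟩ <;>
    rw [rowLen_witness ht ha]
  exacts [hle j, hi]

end RectUnion

/-- For rectangles `m × M` and `n × N` inside `l × k` with
`m + n ≤ l` or `M + N ≤ k`, every `γ ⊆ l × k` with `c^γ_{m×M, n×N} ≠ 0` contains the union
`(m×M) ∪ (n×N) ∪ ((m+n)×(M+N-k)) ∪ ((m+n-l)×(M+N))` (rectangles of nonpositive dimensions
or not fitting inside `l × k` being omitted), and this union is itself the intersection of
all such `γ`. -/
theorem kappa_of_rectangles (l k m M n N : ℕ)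
    (hm : m ≤ l) (hM : M ≤ k) (hn : n ≤ l) (hN : N ≤ k)
    (hnz : m + n ≤ l ∨ M + N ≤ k) (U : YoungDiagram)
    (hU : U = rect m M ⊔ rect n N ⊔
      (if m + n ≤ l then rect (m + n) (M + N - k) else ⊥) ⊔
      (if M + N ≤ k then rect (m + n - l) (M + N) else ⊥)) :
    (∀ γ, γ ≤ rect l k → lrCoeff (rect m M) (rect n N) γ ≠ 0 → U ≤ γ) ∧
    (∀ i : ℕ, ∃ γ, γ ≤ rect l k ∧ lrCoeff (rect m M) (rect n N) γ ≠ 0 ∧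
      γ.rowLen i ≤ U.rowLen i) := by
  subst hU
  exact ⟨fun γ hγ hc => rectUnion_le_of_lrCoeff_ne_zero hm hM hn hN hγ hc,
    exists_rowLen_le_rowLen_rectUnion hm hM hn hN hnz⟩

end QCGrass
end

section
/- Let λ, μ be partitions contained in l×k, and let ρ be a partition with ρ₁ ≤ k and c^ρ_{λ,μ} ≠ 0. Let d be the side of the largest square contained in λ ∩ rotate(μ) inside the l×k rectangle. Then ρ contains the rectangle (l+d)×d, i.e., ρ has at least l+d parts each of size at least d. -/
open YoungDiagram

namespace QCGrass

theorem rect_zero_right_le (m : ℕ) (μ : YoungDiagram) : rect m 0 ≤ μ :=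
  fun _ hp => absurd (mem_rect.1 hp).2 (Nat.not_lt_zero _)

theorem rect_succ_le_of_mem {m M : ℕ} {μ : YoungDiagram} (h : (m, M) ∈ μ) :
    rect (m + 1) (M + 1) ≤ μ := fun p hp => by
  obtain ⟨hp1, hp2⟩ := mem_rect.1 hp
  exact μ.up_left_mem (Nat.le_of_lt_succ hp1) (Nat.le_of_lt_succ hp2) h

theorem exists_isLRTableau_of_lrCoeff_ne_zero {lam mu nu : YoungDiagram}
    (h : lrCoeff lam mu nu ≠ 0) : ∃ T, IsLRTableau lam mu nu T :=
  let ⟨T⟩ := (Nat.card_ne_zero.mp h).1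
  ⟨T.1, T.2⟩

namespace IsLRTableau

variable {lam mu nu : YoungDiagram} {T : ℕ × ℕ → ℕ}

theorem injOn_snd (hT : IsLRTableau lam mu nu T) (v : ℕ) :
    Set.InjOn Prod.snd (((skewCells lam nu).filter (T · = v) : Finset (ℕ × ℕ)) : Set (ℕ × ℕ)) := by
  obtain ⟨-, -, -, hcol, -⟩ := hT
  rintro ⟨i, j⟩ hp ⟨i', j'⟩ hq (rfl : j = j')
  simp only [Finset.mem_coe, Finset.mem_filter] at hp hq
  rcases lt_trichotomy i i' with h | rfl | h
  · exact absurd (hcol i i' j h hp.1 hq.1) (by omega)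
  · rfl
  · exact absurd (hcol i' i j h hq.1 hp.1) (by omega)

theorem card_filter_le_of_snd_mem (hT : IsLRTableau lam mu nu T) {v : ℕ}
    {P : ℕ × ℕ → Prop} [DecidablePred P] {t : Finset ℕ}
    (h : ∀ p ∈ skewCells lam nu, T p = v → P p → p.2 ∈ t) :
    ((skewCells lam nu).filter (fun p => T p = v ∧ P p)).card ≤ t.card := by
  refine Finset.card_le_card_of_injOn Prod.snd (fun p hp => ?_) ((hT.injOn_snd v).mono ?_)
  · obtain ⟨hp, hv, hP⟩ := Finset.mem_filter.1 hp
    exact h p hp hv hP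
  · intro p hp
    obtain ⟨hp, hv, -⟩ := Finset.mem_filter.1 hp
    exact Finset.mem_filter.2 ⟨hp, hv⟩

/-- Cut the reading word just before the first entry `r + 2` of row `a + 1` (or after row `a`
if there is none): by row monotonicity no entry `r + 1` of row `a + 1` follows the cut. -/
theorem card_filter_succ_succ_le (hT : IsLRTableau lam mu nu T) (r a : ℕ) :
    ((skewCells lam nu).filter (fun p => T p = r + 2 ∧ p.1 ≤ a + 1)).card ≤
      ((skewCells lam nu).filter (fun p => T p = r + 1 ∧ p.1 ≤ a)).card := by
  classical
  obtain ⟨-, -, hrow, -, -, hlat⟩ := hT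
  by_cases hex : ∃ b, (a + 1, b) ∈ skewCells lam nu ∧ T (a + 1, b) = r + 2
  · obtain ⟨hb, hTb⟩ := Nat.find_spec hex
    refine le_trans (Finset.card_le_card fun p hp => ?_)
      ((hlat (a + 1) (Nat.find hex) r).trans (Finset.card_le_card fun p hp => ?_))
    · obtain ⟨hp, hv, hpa⟩ := Finset.mem_filter.1 hp
      refine Finset.mem_filter.2 ⟨hp, hv, ?_⟩
      rcases hpa.lt_or_eq with hlt | heq
      · exact Or.inl hlt
      · exact Or.inr ⟨heq, Nat.find_min' hex ⟨heq ▸ hp, heq ▸ hv⟩⟩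
    · obtain ⟨hp, hv, hlt | ⟨heq, hle⟩⟩ := Finset.mem_filter.1 hp
      · exact Finset.mem_filter.2 ⟨hp, hv, Nat.le_of_lt_succ hlt⟩
      · have := hrow (a + 1) _ p.2 hle hb (heq ▸ hp)
        rw [hTb, ← heq, hv] at this
        omega
  · refine le_trans (Finset.card_le_card fun p hp => ?_)
      ((hlat a 0 r).trans (Finset.card_le_card fun p hp => ?_))
    · obtain ⟨hp, hv, hpa⟩ := Finset.mem_filter.1 hp
      refine Finset.mem_filter.2 ⟨hp, hv, ?_⟩
      rcases hpa.lt_or_eq with hlt | heq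
      · omega
      · exact absurd ⟨p.2, heq ▸ hp, heq ▸ hv⟩ hex
    · obtain ⟨hp, hv, hpa⟩ := Finset.mem_filter.1 hp
      exact Finset.mem_filter.2 ⟨hp, hv, by omega⟩

theorem card_filter_le_card_filter_one (hT : IsLRTableau lam mu nu T) (a r : ℕ) :
    ((skewCells lam nu).filter (fun p => T p = r + 1 ∧ p.1 ≤ a + r)).card ≤
      ((skewCells lam nu).filter (fun p => T p = 1 ∧ p.1 ≤ a)).card := by
  induction r with
  | zero => exact le_rfl
  | succ r ih => exact (hT.card_filter_succ_succ_le r (a + r)).trans ih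

theorem mem_of_add_le_rowLen_add (hT : IsLRTableau lam mu nu T) {k a b c r : ℕ}
    (hk : nu.rowLen 0 ≤ k) (hab : (a, b) ∈ lam) (hr : k + c ≤ mu.rowLen r + b) :
    (a + r + 1, c) ∈ nu := by
  classical
  by_contra hc
  have hcol : ∀ p ∈ nu, p.2 < k := fun p hp =>
    calc p.2 < nu.rowLen p.1 := mem_iff_lt_rowLen.1 hp
      _ ≤ nu.rowLen 0 := nu.rowLen_anti 0 p.1 (Nat.zero_le _)
      _ ≤ k := hk
  have hb : b < k := hcol (a, b) (hT.1 hab)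
  have hlow : ((skewCells lam nu).filter (fun p => T p = r + 1 ∧ p.1 ≤ a + r)).card ≤
      k - (b + 1) := by
    refine (hT.card_filter_le_card_filter_one a r).trans ?_
    simpa using hT.card_filter_le_of_snd_mem (t := Finset.Ico (b + 1) k) fun p hp _ hpa =>
      Finset.mem_Ico.2 ⟨Nat.lt_of_not_le fun hpb =>
        (mem_skewCells.1 hp).2 (lam.up_left_mem hpa hpb hab), hcol p (mem_skewCells.1 hp).1⟩
  have hhigh : ((skewCells lam nu).filter (fun p => T p = r + 1 ∧ ¬ p.1 ≤ a + r)).card ≤ c := by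
    simpa using hT.card_filter_le_of_snd_mem (t := Finset.range c) fun p hp _ hpa =>
      Finset.mem_range.2 (Nat.lt_of_not_le fun hcp =>
        hc (nu.up_left_mem (Nat.lt_of_not_le hpa) hcp (mem_skewCells.1 hp).1))
  have hsplit := Finset.card_filter_add_card_filter_not
    (s := (skewCells lam nu).filter (fun p => T p = r + 1)) (p := fun p => p.1 ≤ a + r)
  obtain ⟨-, -, -, -, hcontent, -⟩ := hT
  rw [Finset.filter_filter, Finset.filter_filter, hcontent r] at hsplit
  omega

end IsLRTableau

theorem lr_contains_rect_general (l k d : ℕ) (lam mu rho : YoungDiagram)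
    (hrho : rho.rowLen 0 ≤ k)
    (hlr : lrCoeff lam mu rho ≠ 0)
    (hd : SquareFits l k lam mu d) :
    rect (l + d) d ≤ rho := by
  obtain ⟨T, hT⟩ := exists_isLRTableau_of_lrCoeff_ne_zero hlr
  obtain ⟨i, j, hsq⟩ := hd
  cases d with
  | zero => exact rect_zero_right_le _ _
  | succ d =>
    obtain ⟨hil, -, hj⟩ : i < l ∧ j < k ∧ k - mu.rowLen (l - 1 - i) ≤ j := (hsq i j le_rfl (by omega) le_rfl (by omega)).2
    have hcorner := (hsq (i + d) (j + d) (by omega) (by omega) (by omega) (by omega)).1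
    have hmem := hT.mem_of_add_le_rowLen_add (c := d) (r := l - 1 - i) hrho hcorner (by omega)
    rw [show i + d + (l - 1 - i) + 1 = l + d by omega] at hmem
    exact rect_succ_le_of_mem hmem

/-- If `lam, mu ⊆ l × k`, `rho` has first part at most `k` and
`c^rho_{lam,mu} ≠ 0`, and `d` is the side of the largest square contained in
`lam ∩ rotate(mu)`, then `rho` contains the rectangle `(l+d) × d`. -/
theorem lr_contains_rect (l k d : ℕ) (lam mu rho : YoungDiagram)
    (hlam : lam ≤ rect l k) (hmu : mu ≤ rect l k) (hrho : rho.rowLen 0 ≤ k)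
    (hlr : lrCoeff lam mu rho ≠ 0)
    (hd : SquareFits l k lam mu d) (hd' : ¬ SquareFits l k lam mu (d + 1)) :
    rect (l + d) d ≤ rho :=
  lr_contains_rect_general l k d lam mu rho hrho hlr hd

end QCGrass
end
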